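/- arXiv:1509.05320 — 3 statements merged into one kernel-verified Lean document; each statement's English description precedes it below -/
import Mathlib

section
/- Let 0 < φ < π and 0 < θ < π/3 with θ + φ < π. Then (sin φ + sin(θ − φ))/sin(θ + φ) < 1. -/
open Real

theorem stmt1 (θ φ : ℝ) (h1 : 0 < φ) (h2 : φ < π) (h3 : 0 < θ) (h4 : θ < π / 3)
    (h5 : θ + φ < π) :
    (sin φ + sin (θ - φ)) / sin (θ + φ) < 1 := by
  have hs : 0 < sin (θ + φ) := sin_pos_of_pos_of_lt_pi (by linarith) h5
  rw [div_lt_one hs]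
  have hsφ : 0 < sin φ := sin_pos_of_pos_of_lt_pi h1 h2
  have hc : 1/2 < cos θ := by
    calc (1:ℝ)/2 = cos (π/3) := by rw [Real.cos_pi_div_three]
        _ < cos θ := by
          apply Real.cos_lt_cos_of_nonneg_of_le_pi h3.le (by linarith [Real.pi_pos]) h4
  have key : sin (θ + φ) - sin (θ - φ) = 2 * cos θ * sin φ := by
    rw [sin_add, sin_sub]; ring
  nlinarith
end

section
/- Let 0 < θ < π with e^{iθ} ≠ 1, and define the 3×3 complex matrices R₁ = diag(1, e^{iθ}, 1), S₁ = diag(e^{iθ}, 1, 1), and R₂ = (1/(1−e^{−iθ})) · [[−e^{−iθ}, −1, 1], [−1, −e^{−iθ}, 1], [−2cosθ, −2cosθ, 1+e^{iθ}]]. Then S₁ R₁ = R₁ S₁ and S₁ R₂ S₁ = R₂ S₁ R₂ (the braid relation). -/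
open Real Matrix

set_option maxHeartbeats 1000000 in
lemma braid_key_aux (e : ℂ) (hne : e ≠ 0) :
    (1 - e⁻¹) • ((!![e,0,0;0,1,0;0,0,1] : Matrix (Fin 3) (Fin 3) ℂ) *
        !![ -e⁻¹, -1, 1; -1, -e⁻¹, 1; -(e + e⁻¹), -(e + e⁻¹), 1 + e] * !![e,0,0;0,1,0;0,0,1])
      = !![ -e⁻¹, -1, 1; -1, -e⁻¹, 1; -(e + e⁻¹), -(e + e⁻¹), 1 + e] * !![e,0,0;0,1,0;0,0,1] *
        !![ -e⁻¹, -1, 1; -1, -e⁻¹, 1; -(e + e⁻¹), -(e + e⁻¹), 1 + e] := by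
  ext i j
  fin_cases i <;> fin_cases j <;>
    · simp [Matrix.mul_apply, Fin.sum_univ_three, Matrix.vecHead, Matrix.vecTail]
      field_simp
      ring

set_option maxHeartbeats 1000000 in
theorem stmt14 (θ : ℝ) (h1 : 0 < θ) (h2 : θ < π)
    (he : Complex.exp (θ * Complex.I) ≠ 1)
    (R₁ S₁ R₂ : Matrix (Fin 3) (Fin 3) ℂ)
    (hR1 : R₁ = Matrix.diagonal ![1, Complex.exp (θ * Complex.I), 1])
    (hS1 : S₁ = Matrix.diagonal ![Complex.exp (θ * Complex.I), 1, 1])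
    (hR2 : R₂ = (1 / (1 - Complex.exp (-θ * Complex.I))) •
      !![ -Complex.exp (-θ * Complex.I), -1, 1;
          -1, -Complex.exp (-θ * Complex.I), 1;
          (-2 * cos θ : ℂ), (-2 * cos θ : ℂ), 1 + Complex.exp (θ * Complex.I)]) :
    S₁ * R₁ = R₁ * S₁ ∧ S₁ * R₂ * S₁ = R₂ * S₁ * R₂ := by
  have hne : Complex.exp (θ * Complex.I) ≠ 0 := Complex.exp_ne_zero _
  have hneg : Complex.exp (-θ * Complex.I) = (Complex.exp (θ * Complex.I))⁻¹ := by
    rw [← Complex.exp_neg]; ring_nf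
  have hcos : ((-2 * cos θ : ℝ) : ℂ) = -(Complex.exp (θ * Complex.I) + (Complex.exp (θ * Complex.I))⁻¹) := by
    push_cast
    rw [Complex.cos, hneg]
    ring
  have hd : 1 - (Complex.exp (θ * Complex.I))⁻¹ ≠ 0 := by
    intro h
    apply he
    have h2 : Complex.exp (θ * Complex.I) * (1 - (Complex.exp (θ * Complex.I))⁻¹) = 0 := by
      rw [h, mul_zero]
    rw [mul_sub, mul_one, mul_inv_cancel₀ hne, sub_eq_zero] at h2
    exact h2
  have hdiag : ∀ a b c : ℂ, Matrix.diagonal ![a, b, c] = !![a,0,0;0,b,0;0,0,c] := by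
    intro a b c
    ext i j
    fin_cases i <;> fin_cases j <;> simp [Matrix.diagonal, Matrix.vecHead, Matrix.vecTail]
  rw [hdiag] at hR1 hS1
  have hcos' : ((-2 : ℂ) * (cos θ : ℂ)) = -(Complex.exp (θ * Complex.I) + (Complex.exp (θ * Complex.I))⁻¹) := by
    rw [← hcos]; push_cast; ring
  rw [hneg, hcos'] at hR2
  set e := Complex.exp (θ * Complex.I) with hee
  subst hR1 hS1 hR2
  refine ⟨?_, ?_⟩
  · ext i j
    fin_cases i <;> fin_cases j <;>
      simp [Matrix.mul_apply, Fin.sum_univ_three, Matrix.vecHead, Matrix.vecTail]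
  · have key := braid_key_aux e hne
    calc (!![e,0,0;0,1,0;0,0,1] : Matrix (Fin 3) (Fin 3) ℂ) *
          ((1 / (1 - e⁻¹)) • !![ -e⁻¹, -1, 1; -1, -e⁻¹, 1; -(e + e⁻¹), -(e + e⁻¹), 1 + e]) *
          !![e,0,0;0,1,0;0,0,1]
        = (1 / (1 - e⁻¹)) • (!![e,0,0;0,1,0;0,0,1] *
            !![ -e⁻¹, -1, 1; -1, -e⁻¹, 1; -(e + e⁻¹), -(e + e⁻¹), 1 + e] * !![e,0,0;0,1,0;0,0,1]) := by
          rw [Matrix.mul_smul, Matrix.smul_mul]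
      _ = (1 / (1 - e⁻¹) * (1 / (1 - e⁻¹))) • ((1 - e⁻¹) • (!![e,0,0;0,1,0;0,0,1] *
            !![ -e⁻¹, -1, 1; -1, -e⁻¹, 1; -(e + e⁻¹), -(e + e⁻¹), 1 + e] * !![e,0,0;0,1,0;0,0,1])) := by
          rw [smul_smul]
          congr 1
          have h1e : e - 1 ≠ 0 := sub_ne_zero.mpr he
          field_simp
      _ = ((1 / (1 - e⁻¹)) • !![ -e⁻¹, -1, 1; -1, -e⁻¹, 1; -(e + e⁻¹), -(e + e⁻¹), 1 + e]) *
          !![e,0,0;0,1,0;0,0,1] *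
          ((1 / (1 - e⁻¹)) • !![ -e⁻¹, -1, 1; -1, -e⁻¹, 1; -(e + e⁻¹), -(e + e⁻¹), 1 + e]) := by
          rw [key, Matrix.smul_mul, Matrix.smul_mul, Matrix.mul_smul, smul_smul]
end

section
/- Let 0 < θ < π with e^{iθ} ≠ 1, and let K be the matrix (1/(1−e^{−iθ})) · [[−1, −1, 1], [−e^{2iθ}, −1, e^{iθ}], [−2cosθ e^{iθ}, −2cosθ, 1+e^{iθ}]]. Then K⁴ is a nonzero scalar multiple of the 3×3 identity matrix. -/
set_option maxHeartbeats 1000000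

open Real Matrix

theorem stmt16 (θ : ℝ) (h1 : 0 < θ) (h2 : θ < π)
    (he : Complex.exp (θ * Complex.I) ≠ 1)
    (K : Matrix (Fin 3) (Fin 3) ℂ)
    (hK : K = (1 / (1 - Complex.exp (-θ * Complex.I))) •
      !![ -1, -1, 1;
          -Complex.exp (2 * θ * Complex.I), -1, Complex.exp (θ * Complex.I);
          (-2 * cos θ : ℂ) * Complex.exp (θ * Complex.I), (-2 * cos θ : ℂ),
          1 + Complex.exp (θ * Complex.I)]) :
    ∃ c : ℂ, c ≠ 0 ∧ K ^ 4 = c • (1 : Matrix (Fin 3) (Fin 3) ℂ) := by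
  set z : ℂ := Complex.exp (θ * Complex.I) with hz
  have hz0 : z ≠ 0 := Complex.exp_ne_zero _
  have hneg : Complex.exp (-θ * Complex.I) = z⁻¹ := by
    rw [hz, ← Complex.exp_neg]; ring_nf
  have h2θ : Complex.exp (2 * θ * Complex.I) = z ^ 2 := by
    rw [hz, ← Complex.exp_nat_mul]; ring_nf
  have hcos : ((cos θ : ℝ) : ℂ) = (z + z⁻¹) / 2 := by
    rw [Complex.ofReal_cos, Complex.cos, hz, ← Complex.exp_neg]
    ring_nf
  have hzne1 : z ≠ 1 := he
  have hd : (1 : ℂ) - z⁻¹ ≠ 0 := by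
    intro h
    apply hzne1
    have hi : (z⁻¹ : ℂ) = 1 := by linear_combination -h
    field_simp at hi
    exact hi.symm
  set M : Matrix (Fin 3) (Fin 3) ℂ :=
    !![ -1, -1, 1;
        -(z ^ 2), -1, z;
        (-2 * ((z + z⁻¹) / 2)) * z, -2 * ((z + z⁻¹) / 2), 1 + z] with hM
  have hKM : K = (1 / (1 - z⁻¹)) • M := by
    rw [hK, hneg, h2θ, hcos, hM]
  have hM2 : M * M = !![0, 2 - z - z⁻¹, 0;
                        2 * z ^ 2 - z ^ 3 - z, 0, 0;
                        0, 0, -1 + 2 * z - z ^ 2] := by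
    rw [hM, Matrix.mul_fin_three]
    ext i j
    fin_cases i <;> fin_cases j <;> simp [Matrix.vecHead, Matrix.vecTail] <;> (try field_simp) <;> ring
  have hM4 : M ^ 4 = ((z - 1) ^ 4) • (1 : Matrix (Fin 3) (Fin 3) ℂ) := by
    have h4 : M ^ 4 = (M * M) * (M * M) := by
      rw [show (4:ℕ) = 2 * 2 from rfl, pow_mul, pow_two, pow_two]
    rw [h4, hM2, Matrix.mul_fin_three]
    ext i j
    fin_cases i <;> fin_cases j <;>
      simp [Matrix.one_apply, Matrix.vecHead, Matrix.vecTail] <;> (try field_simp) <;> ring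
  refine ⟨z ^ 4, pow_ne_zero _ hz0, ?_⟩
  have hz1 : z - 1 ≠ 0 := sub_ne_zero.mpr hzne1
  have hsc : (1 / (1 - z⁻¹)) * (z - 1) = z := by
    field_simp
  rw [hKM, smul_pow, hM4, smul_smul, ← mul_pow, hsc]
end
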